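/- arXiv:2309.15412 — 2 statements merged into one kernel-verified Lean document; each statement's English description precedes it below -/
import Mathlib

section
/- Fix the root system of sl_r with simple roots β_1, ..., β_{r-1}, fundamental weights ω_1, ..., ω_{r-1}, and ρ the sum of all fundamental weights. Let λ = Σ_j a_j ω_j be a dominant integral weight with a_j ≥ 0 and Σ_j j·a_j = n, where r > 2n. Then λ is singular at level 0: there exists a positive root β with (λ + ρ, β) divisible by r. Concretely, setting a = Σ_j a_j and β = β_1 + β_2 + ... + β_{r-a}, one has (λ + ρ, β) = r. -/
open Finset

lemma sum_le_sum_mul_self_of_apply_zero {s : Finset ℕ} {a : ℕ → ℕ} (ha : a 0 = 0) :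
    ∑ j ∈ s, a j ≤ ∑ j ∈ s, j * a j := by
  refine sum_le_sum fun j _ => ?_
  rcases j.eq_zero_or_pos with rfl | hj
  · simp [ha]
  · exact Nat.le_mul_of_pos_left (a j) hj

lemma apply_eq_zero_of_sum_mul_self_le {s : Finset ℕ} {a : ℕ → ℕ} {n j : ℕ} (hj : j ∈ s)
    (hjn : n < j) (hsum : ∑ i ∈ s, i * a i ≤ n) : a j = 0 := by
  by_contra hne
  have : j ≤ ∑ i ∈ s, i * a i :=
    (Nat.le_mul_of_pos_right j (Nat.pos_of_ne_zero hne)).trans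
      (single_le_sum (f := fun i => i * a i) (fun _ _ => Nat.zero_le _) hj)
  omega

lemma sum_eq_sum_Icc_of_apply_eq_zero {s : Finset ℕ} {a : ℕ → ℕ} {n : ℕ} (hs : Icc 1 n ⊆ s)
    (ha : ∀ j ∉ Icc 1 n, a j = 0) : ∑ j ∈ s, a j = ∑ j ∈ Icc 1 n, a j :=
  (sum_subset hs fun j _ hj => ha j hj).symm

/-- For a dominant weight `λ = Σ a_j ω_j` of `sl_r` with
`Σ j·a_j = n` and `r > 2n`, setting `a = Σ a_j` and `β = β_1 + ⋯ + β_{r-a}`,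
the pairing `(λ+ρ, β) = Σ_{j=1}^{r-a} (a_j + 1)` equals `r`; in particular `λ`
is singular at level 0. -/
theorem stmt1 (r n : ℕ) (h : 2 * n < r) (a : ℕ → ℕ)
    (hsupp : ∀ j, (j = 0 ∨ r ≤ j) → a j = 0)
    (hn : ∑ j ∈ Finset.range r, j * a j = n) :
    ∑ j ∈ Finset.Icc 1 (r - ∑ j ∈ Finset.range r, a j), (a j + 1) = r := by
  set A := ∑ j ∈ range r, a j
  have hA : A ≤ n := hn ▸ sum_le_sum_mul_self_of_apply_zero (hsupp 0 (.inl rfl))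
  -- The weight condition confines the support of `a` to `[1, n]`, which lies inside `[1, r - A]`.
  have hsupp_Icc : ∀ j ∉ Icc 1 n, a j = 0 := by
    intro j hj
    rw [mem_Icc, not_and_or, not_le, not_le, Nat.lt_one_iff] at hj
    rcases hj with rfl | hnj
    · exact hsupp 0 (.inl rfl)
    · by_cases hrj : r ≤ j
      · exact hsupp j (.inr hrj)
      · exact apply_eq_zero_of_sum_mul_self_le (mem_range.2 (by omega)) hnj hn.le
  have hsum : ∑ j ∈ Icc 1 (r - A), a j = A := by
    have hrange : Icc 1 n ⊆ range r := fun j hj => mem_range.2 (by rw [mem_Icc] at hj; omega)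
    exact (sum_eq_sum_Icc_of_apply_eq_zero (Icc_subset_Icc_right (by omega)) hsupp_Icc).trans
      (sum_eq_sum_Icc_of_apply_eq_zero hrange hsupp_Icc).symm
  rw [sum_add_distrib, hsum, sum_const, Nat.card_Icc, smul_eq_mul, mul_one]
  omega
end

section
/- Let g ≥ 2, r ≥ 2, and let a_1, ..., a_{r-1} ≥ 0 be integers with Σ a_j ≤ (r-1)(g-1) + 1. Then for every s with 1 ≤ s ≤ r-1, (Σ_j a_j)·((r-s)s + 1)/r ≤ (r-s)·s·(g-1) + 1. -/
/-!
Write `h = g - 1` and `k = (r - s) s`. Since `k - (r - 1) = (r - s - 1)(s - 1) ≥ 0`, the worst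
stratum is `s = 1`, and there the bound is an identity:
`r (k h + 1) - ((r - 1) h + 1)(k + 1) = (h - 1)(k - (r - 1))`, which is `≥ 0` because `h ≥ 1`.
-/

section

variable {R : Type*} [CommRing R] [LinearOrder R] [IsStrictOrderedRing R]

theorem sub_one_le_sub_mul_self {r s : R} (hs : 1 ≤ s) (hsr : s + 1 ≤ r) :
    r - 1 ≤ (r - s) * s := by
  have key : (r - s) * s - (r - 1) = (s - 1) * (r - s - 1) := by ring
  linarith [mul_nonneg (sub_nonneg.2 hs) (sub_nonneg.2 (le_sub_iff_add_le.2 hsr))]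

theorem sub_one_mul_add_one_mul_le {r h k : R} (hh : 1 ≤ h) (hk : r - 1 ≤ k) :
    ((r - 1) * h + 1) * (k + 1) ≤ r * (k * h + 1) := by
  have key : r * (k * h + 1) - ((r - 1) * h + 1) * (k + 1) = (h - 1) * (k - (r - 1)) := by
    ring
  linarith [mul_nonneg (sub_nonneg.2 hh) (sub_nonneg.2 hk)]

theorem mul_add_one_div_le {K : Type*} [Field K] [LinearOrder K] [IsStrictOrderedRing K]
    {A r h k : K} (hr : 0 < r) (hh : 1 ≤ h) (hk : r - 1 ≤ k)
    (hA : A ≤ (r - 1) * h + 1) :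
    A * (k + 1) / r ≤ k * h + 1 := by
  rw [div_le_iff₀ hr]
  calc A * (k + 1) ≤ ((r - 1) * h + 1) * (k + 1) :=
        mul_le_mul_of_nonneg_right hA (by linarith)
    _ ≤ r * (k * h + 1) := sub_one_mul_add_one_mul_le hh hk
    _ = (k * h + 1) * r := mul_comm _ _

end

theorem stmt16_general (r g : ℕ) (hg : 2 ≤ g) (a : ℕ → ℤ)
    (hsum : ∑ j ∈ Finset.Icc 1 (r - 1), a j
      ≤ ((r : ℤ) - 1) * ((g : ℤ) - 1) + 1) :
    ∀ s : ℕ, 1 ≤ s → s ≤ r - 1 →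
      ((∑ j ∈ Finset.Icc 1 (r - 1), a j : ℤ) : ℚ)
          * (((r : ℚ) - s) * s + 1) / (r : ℚ)
        ≤ ((r : ℚ) - s) * s * ((g : ℚ) - 1) + 1 := by
  intro s hs1 hs2
  have hsr : (s : ℚ) + 1 ≤ r := by exact_mod_cast (by omega : s + 1 ≤ r)
  have hs : (1 : ℚ) ≤ s := by exact_mod_cast hs1
  have hh : (1 : ℚ) ≤ (g : ℚ) - 1 := by
    have : (2 : ℚ) ≤ g := by exact_mod_cast hg
    linarith
  have hA : ((∑ j ∈ Finset.Icc 1 (r - 1), a j : ℤ) : ℚ) ≤ ((r : ℚ) - 1) * ((g : ℚ) - 1) + 1 := by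
    exact_mod_cast hsum
  exact mul_add_one_div_le (by linarith) hh (sub_one_le_sub_mul_self hs hsr) hA

/-- For `g ≥ 2`, `r ≥ 2` and nonnegative integers `a_j` with
`Σ a_j ≤ (r-1)(g-1) + 1`, for every `1 ≤ s ≤ r-1` one has
`(Σ a_j)((r-s)s + 1)/r ≤ (r-s)s(g-1) + 1`. -/
theorem stmt16 (r g : ℕ) (hr : 2 ≤ r) (hg : 2 ≤ g) (a : ℕ → ℤ)
    (hpos : ∀ j ∈ Finset.Icc 1 (r - 1), 0 ≤ a j)
    (hsum : ∑ j ∈ Finset.Icc 1 (r - 1), a j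
      ≤ ((r : ℤ) - 1) * ((g : ℤ) - 1) + 1) :
    ∀ s : ℕ, 1 ≤ s → s ≤ r - 1 →
      ((∑ j ∈ Finset.Icc 1 (r - 1), a j : ℤ) : ℚ)
          * (((r : ℚ) - s) * s + 1) / (r : ℚ)
        ≤ ((r : ℚ) - s) * s * ((g : ℚ) - 1) + 1 :=
  stmt16_general r g hg a hsum
end
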